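/- In a WNA algebra with products ∘_n defined via f, one has f ∘_m (f ∘_n f) = h^{(n)}_m - \sum_{k=1}^{m-1} p_{m-k} ∘ h^{(n)}_{k-1}, where h^{(n)}_m := L_f^m(p_n) and p_n := f ∘_n f. -/
import Mathlib


/-- The middle nucleus of a (possibly nonassociative) algebra. -/
def middleNucleus {A : Type*} [NonUnitalNonAssocRing A] : Set A :=
  {b : A | ∀ a c : A, (a * b) * c = a * (b * c)}

/-- The sequence of products `∘_{n+1}` built from an element `f` of a WNA algebra:
`circ f n a b` is `a ∘_{n+1} b`. -/
def circ {A : Type*} [NonUnitalNonAssocRing A] (f : A) : ℕ → A → A → A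
  | 0 => fun a b => a * b
  | n + 1 => fun a b => a * circ f n f b - circ f n (a * f) b

section Aux

variable {A : Type*} [NonUnitalNonAssocRing A]

lemma circ_succ (f : A) (n : ℕ) (a b : A) :
    circ f (n + 1) a b = a * circ f n f b - circ f n (a * f) b := rfl

/-- Every value of `circ` is in the middle nucleus (WNA property). -/
lemma circ_nucleus (hW : ∀ a b c d : A, ((a * (b * c)) * d) = a * ((b * c) * d))
    (f : A) : ∀ (n : ℕ) (a b x y : A),
    (x * circ f n a b) * y = x * (circ f n a b * y) := by
  intro n
  induction n with
  | zero => intro a b x y; exact hW x a b y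
  | succ n ih =>
    intro a b x y
    rw [circ_succ]
    simp only [mul_sub, sub_mul]
    rw [hW x a (circ f n f b) y, ih (a*f) b x y]

/-- The key expansion: `g ∘_{n+1} b = g · L_f^n b - ∑_{i<n} (g ∘_{i+1} f) · L_f^{n-1-i} b`. -/
lemma circ_expand (hW : ∀ a b c d : A, ((a * (b * c)) * d) = a * ((b * c) * d))
    (f b : A) : ∀ (n : ℕ) (g : A),
    circ f n g b = g * (fun x => f * x)^[n] b
      - ∑ i ∈ Finset.range n, circ f i g f * (fun x => f * x)^[n-1-i] b := by
  intro n
  induction n with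
  | zero => intro g; simp [circ]
  | succ n ih =>
    intro g
    rw [circ_succ, ih f, ih (g * f)]
    simp only [Nat.add_sub_cancel]
    rw [Finset.sum_range_succ']
    have h0 : circ f 0 g f * (fun x => f * x)^[n - 0] b
        = (g * f) * (fun x => f * x)^[n] b := by simp [circ]
    rw [h0, Function.iterate_succ_apply' (fun x => f * x) n b, mul_sub, Finset.mul_sum]
    have hterm : ∀ i ∈ Finset.range n,
        circ f (i + 1) g f * (fun x => f * x)^[n - (i + 1)] b
          = g * (circ f i f f * (fun x => f * x)^[n - 1 - i] b)
            - circ f i (g * f) f * (fun x => f * x)^[n - 1 - i] b := by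
      intro i hi
      rw [circ_succ, sub_mul]
      have : n - (i + 1) = n - 1 - i := by omega
      rw [this, circ_nucleus hW f i f f g ((fun x => f * x)^[n - 1 - i] b)]
    rw [Finset.sum_congr rfl hterm, Finset.sum_sub_distrib]
    abel

end Aux

/-- `f ∘_m (f ∘_n f) = h^{(n)}_m - ∑_{k=1}^{m-1} p_{m-k} ∘ h^{(n)}_{k-1}`, where
`h^{(n)}_m = L_f^m p_n` and `p_j = f ∘_j f`. -/
theorem circ_f_h_formula
    {A : Type*} [NonUnitalNonAssocRing A]
    (hWNA : ∀ a b c d : A, ((a * (b * c)) * d) = a * ((b * c) * d))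
    (hNA : ¬ ∀ a b c : A, (a * b) * c = a * (b * c))
    (f : A) (hf : f ∉ middleNucleus)
    (p : ℕ → A) (hp : ∀ k, 1 ≤ k → p k = circ f (k - 1) f f)
    (Lf : A → A) (hLf : ∀ a, Lf a = f * a)
    (h : ℕ → ℕ → A) (hh : ∀ (n : ℕ), 1 ≤ n → ∀ (m : ℕ), h n m = Lf^[m] (p n)) :
    ∀ (m n : ℕ), 1 ≤ m → 1 ≤ n →
      circ f (m - 1) f (circ f (n - 1) f f)
        = h n m - ∑ k ∈ Finset.Icc 1 (m - 1), p (m - k) * h n (k - 1) := by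
  intro m n hm hn
  have hLf' : Lf = fun x => f * x := funext hLf
  set B := circ f (n-1) f f with hB
  set N := m - 1 with hN
  rw [circ_expand hWNA f B N f]
  have h1 : f * (fun x => f * x)^[N] B = (fun x => f * x)^[m] B := by
    have hmN : m = N + 1 := by omega
    rw [hmN, Function.iterate_succ_apply']
  have h2 : h n m = (fun x => f * x)^[m] B := by rw [hh n hn m, hp n hn, hLf']
  rw [h1, ← h2]
  congr 1
  have hIcc : Finset.Icc 1 N = Finset.Ico 1 (N+1) := (Finset.Ico_add_one_right_eq_Icc 1 N).symm
  rw [hIcc, Finset.sum_Ico_eq_sum_range]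
  simp only [Nat.add_sub_cancel]
  rw [← Finset.sum_range_reflect (fun i => circ f i f f * (fun x => f * x)^[N-1-i] B) N]
  apply Finset.sum_congr rfl
  intro i hi
  have hi' : i < N := Finset.mem_range.mp hi
  have e1 : N - 1 - (N - 1 - i) = i := by omega
  rw [e1]
  have e2 : p (m - (1 + i)) = circ f (N - 1 - i) f f := by
    rw [hp (m - (1+i)) (by omega)]; congr 1; omega
  have e3 : h n (1 + i - 1) = (fun x => f * x)^[i] B := by
    rw [hh n hn, hp n hn, hLf']; congr 1; omega
  rw [e2, e3]
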